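/- Let 0 → A → E →^β B → 0 be a non-abelian extension of associative conformal algebras. There is an exact sequence of groups 1 → Aut_A^{id}(E) → Aut_A(E) →^κ Aut(A) × Aut(B) →^W H²_{nab}(B,A), where κ(f) = (f|_A, β∘f∘γ), Aut_A^{id}(E) = ker κ, and W is the Wells map W(g,h) = [(▶^{g,h}, ◀^{g,h}, χ^{g,h}) − (▶,◀,χ)]; exactness means ker κ = Aut_A^{id}(E) and Im κ = {(g,h) | W(g,h) = 0}. -/

import Mathlib

structure AssocConformalAlg (k : Type*) [Field k] (A : Type*) [AddCommGroup A] [Module k A] where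
  D : A →ₗ[k] A
  mul : k → A →ₗ[k] A →ₗ[k] A
  conf_left : ∀ (l : k) (a b : A), mul l (D a) b = -(l • mul l a b)
  conf_right : ∀ (l : k) (a b : A), mul l a (D b) = D (mul l a b) + l • mul l a b
  assoc : ∀ (l m : k) (a b c : A), mul (l + m) (mul l a b) c = mul l a (mul m b c)

structure IsNonAbel2Cocycle {k : Type*} [Field k] {A B : Type*}
    [AddCommGroup A] [Module k A] [AddCommGroup B] [Module k B]
    (SA : AssocConformalAlg k A) (SB : AssocConformalAlg k B)
    (lact : k → B →ₗ[k] A →ₗ[k] A) (ract : k → A →ₗ[k] B →ₗ[k] A)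
    (chi : k → B →ₗ[k] B →ₗ[k] A) : Prop where
  lact_DB : ∀ l b a, lact l (SB.D b) a = -(l • lact l b a)
  lact_DA : ∀ l b a, lact l b (SA.D a) = SA.D (lact l b a) + l • lact l b a
  ract_DA : ∀ l a b, ract l (SA.D a) b = -(l • ract l a b)
  ract_DB : ∀ l a b, ract l a (SB.D b) = SA.D (ract l a b) + l • ract l a b
  chi_DB1 : ∀ l b1 b2, chi l (SB.D b1) b2 = -(l • chi l b1 b2)
  chi_DB2 : ∀ l b1 b2, chi l b1 (SB.D b2) = SA.D (chi l b1 b2) + l • chi l b1 b2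
  coh1 : ∀ l m b1 b2 a, lact l b1 (lact m b2 a)
      = lact (l + m) (SB.mul l b1 b2) a + SA.mul (l + m) (chi l b1 b2) a
  coh2 : ∀ l m a b1 b2, ract (l + m) (ract l a b1) b2
      = ract l a (SB.mul m b1 b2) + SA.mul l a (chi m b1 b2)
  coh3 : ∀ l m b1 a b2, lact l b1 (ract m a b2) = ract (l + m) (lact l b1 a) b2
  coh4 : ∀ l m a1 a2 b, ract (l + m) (SA.mul l a1 a2) b = SA.mul l a1 (ract m a2 b)
  coh4' : ∀ l m b a1 a2, lact l b (SA.mul m a1 a2) = SA.mul (l + m) (lact l b a1) a2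
  coh4'' : ∀ l m a1 b a2, SA.mul (l + m) (ract l a1 b) a2 = SA.mul l a1 (lact m b a2)
  coh5 : ∀ l m b1 b2 b3, lact l b1 (chi m b2 b3) + chi (l + m) b1 (SB.mul m b2 b3)
      = chi (l + m) (SB.mul l b1 b2) b3 + ract (l + m) (chi l b1 b2) b3

def CocycleEquivVia {k : Type*} [Field k] {A B : Type*}
    [AddCommGroup A] [Module k A] [AddCommGroup B] [Module k B]
    (SA : AssocConformalAlg k A) (SB : AssocConformalAlg k B)
    (lact : k → B → A → A) (ract : k → A → B → A) (chi : k → B → B → A)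
    (lact' : k → B → A → A) (ract' : k → A → B → A) (chi' : k → B → B → A)
    (δ : B →ₗ[k] A) : Prop :=
  (∀ b, δ (SB.D b) = SA.D (δ b)) ∧
  (∀ l b a, lact' l b a - lact l b a = SA.mul l (δ b) a) ∧
  (∀ l a b, ract' l a b - ract l a b = SA.mul l a (δ b)) ∧
  (∀ l b1 b2, chi' l b1 b2 - chi l b1 b2
    = lact' l b1 (δ b2) - δ (SB.mul l b1 b2) + ract' l (δ b1) b2 - SA.mul l (δ b1) (δ b2))

/-- An automorphism of an associative conformal algebra: a `k[∂]`-module automorphism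
preserving the λ-product. -/
def IsConfAut {k : Type*} [Field k] {E : Type*} [AddCommGroup E] [Module k E]
    (S : AssocConformalAlg k E) (f : E ≃ₗ[k] E) : Prop :=
  (∀ x, f (S.D x) = S.D (f x)) ∧ ∀ (l : k) (x y : E), f (S.mul l x y) = S.mul l (f x) (f y)

/-!
An automorphism `f` of `E ≅ A × B` with `f (a, 0) = (g a, 0)` and `(f (0, b)).2 = h b` is block
upper triangular: `f (x, y) = (g x + δ (h y), h y)` for a linear `δ : B → A`. Multiplicativity of
such a map may be tested on pairs of elements of `A` and `B`. On `A × A` it is that of `g`; on the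
mixed pairs and on `B × B`, together with compatibility with `∂`, it says precisely that `δ`
relates `(▶, ◀, χ)` and `(▶^{g,h}, ◀^{g,h}, χ^{g,h})`, i.e. that `W(g, h) = 0`.
-/

section ProdLinear

variable {R M N M' N' P : Type*} [CommSemiring R] [AddCommMonoid M] [AddCommMonoid N]
  [AddCommMonoid M'] [AddCommMonoid N'] [AddCommMonoid P]
  [Module R M] [Module R N] [Module R M'] [Module R N'] [Module R P]

theorem LinearMap.forall_apply_eq_iff_prod (μ ν : M × N →ₗ[R] M' × N' →ₗ[R] P) :
    (∀ p q, μ p q = ν p q) ↔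
      (∀ a a', μ (a, 0) (a', 0) = ν (a, 0) (a', 0)) ∧
      (∀ a b', μ (a, 0) (0, b') = ν (a, 0) (0, b')) ∧
      (∀ b a', μ (0, b) (a', 0) = ν (0, b) (a', 0)) ∧
      (∀ b b', μ (0, b) (0, b') = ν (0, b) (0, b')) := by
  refine ⟨fun h => ⟨fun _ _ => h _ _, fun _ _ => h _ _, fun _ _ => h _ _, fun _ _ => h _ _⟩, ?_⟩
  rintro ⟨hll, hlr, hrl, hrr⟩ ⟨a, b⟩ ⟨a', b'⟩
  have split : ∀ (x : M) (y : N), ((x, y) : M × N) = (x, 0) + (0, y) := fun x y => by simp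
  have split' : ∀ (x : M') (y : N'), ((x, y) : M' × N') = (x, 0) + (0, y) := fun x y => by simp
  rw [split a b, split' a' b']
  simp only [map_add, LinearMap.add_apply, hll, hlr, hrl, hrr]

theorem LinearMap.snd_apply_eq_of_snd_apply_inl (f : M × N →ₗ[R] M' × N') {h : N → N'}
    (hA : ∀ a, (f (a, 0)).2 = 0) (hB : ∀ b, (f (0, b)).2 = h b) (p : M × N) :
    (f p).2 = h p.2 := by
  rw [show f p = f (p.1, 0) + f (0, p.2) by rw [← map_add]; simp, Prod.snd_add, hA, hB,
    zero_add]

end ProdLinear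

section UpperSkewProd

variable {R M N M' N' : Type*} [Semiring R] [AddCommMonoid M] [AddCommMonoid N]
  [AddCommGroup M'] [AddCommMonoid N'] [Module R M] [Module R N] [Module R M'] [Module R N']

/-- Block upper triangular counterpart of `LinearEquiv.skewProd`. -/
def LinearEquiv.upperSkewProd (e₁ : M ≃ₗ[R] M') (e₂ : N ≃ₗ[R] N') (f : N →ₗ[R] M') :
    (M × N) ≃ₗ[R] M' × N' :=
  { ((e₁ : M →ₗ[R] M').comp (LinearMap.fst R M N) + f.comp (LinearMap.snd R M N)).prod
      ((e₂ : N →ₗ[R] N').comp (LinearMap.snd R M N)) with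
    invFun := fun p => (e₁.symm (p.1 - f (e₂.symm p.2)), e₂.symm p.2)
    left_inv := fun p => by simp
    right_inv := fun p => by simp }

@[simp]
theorem LinearEquiv.upperSkewProd_apply (e₁ : M ≃ₗ[R] M') (e₂ : N ≃ₗ[R] N') (f : N →ₗ[R] M')
    (p : M × N) : e₁.upperSkewProd e₂ f p = (e₁ p.1 + f p.2, e₂ p.2) :=
  rfl

theorem LinearEquiv.exists_eq_upperSkewProd (F : (M × N) ≃ₗ[R] M' × N') (e₁ : M ≃ₗ[R] M')
    (e₂ : N ≃ₗ[R] N') (hA : ∀ a, F (a, 0) = (e₁ a, 0)) (hB : ∀ b, (F (0, b)).2 = e₂ b) :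
    ∃ δ : N' →ₗ[R] M', F = e₁.upperSkewProd e₂ (δ ∘ₗ e₂) := by
  refine ⟨LinearMap.fst R M' N' ∘ₗ F ∘ₗ LinearMap.inr R M N ∘ₗ e₂.symm, ?_⟩
  ext ⟨a, b⟩ : 1
  have split : ((a, b) : M × N) = (a, 0) + (0, b) := by simp
  rw [upperSkewProd_apply, split, map_add, hA]
  ext
  · simp
  · simp [hB]

end UpperSkewProd

section ConformalAut

variable {k E : Type*} [Field k] [AddCommGroup E] [Module k E] {S : AssocConformalAlg k E}

theorem IsConfAut.trans {f f' : E ≃ₗ[k] E} (hf : IsConfAut S f) (hf' : IsConfAut S f') :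
    IsConfAut S (f.trans f') :=
  ⟨fun x => by simp [hf.1, hf'.1], fun l x y => by simp [hf.2, hf'.2]⟩

end ConformalAut

/-- `S` is the extension `E` transported to `A × B` along the section `γ = inr`, so that its
product is the one determined by the cocycle `(lact, ract, chi)`. -/
structure IsCocycleExtension {k A B : Type*} [Field k] [AddCommGroup A] [Module k A]
    [AddCommGroup B] [Module k B] (SA : AssocConformalAlg k A) (SB : AssocConformalAlg k B)
    (lact : k → B →ₗ[k] A →ₗ[k] A) (ract : k → A →ₗ[k] B →ₗ[k] A)
    (chi : k → B →ₗ[k] B →ₗ[k] A) (S : AssocConformalAlg k (A × B)) : Prop where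
  D_apply : ∀ p : A × B, S.D p = (SA.D p.1, SB.D p.2)
  mul_apply : ∀ (l : k) (p q : A × B), S.mul l p q =
    (SA.mul l p.1 q.1 + lact l p.2 q.1 + ract l p.1 q.2 + chi l p.2 q.2, SB.mul l p.2 q.2)

namespace IsCocycleExtension

variable {k A B : Type*} [Field k] [AddCommGroup A] [Module k A] [AddCommGroup B] [Module k B]
  {SA : AssocConformalAlg k A} {SB : AssocConformalAlg k B} {lact : k → B →ₗ[k] A →ₗ[k] A}
  {ract : k → A →ₗ[k] B →ₗ[k] A} {chi : k → B →ₗ[k] B →ₗ[k] A} {S : AssocConformalAlg k (A × B)}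
  {g : A ≃ₗ[k] A} {h : B ≃ₗ[k] B}

theorem upperSkewProd_map_D_iff (hS : IsCocycleExtension SA SB lact ract chi S)
    (hg : IsConfAut SA g) (hh : IsConfAut SB h) (δ : B →ₗ[k] A) :
    (∀ p, g.upperSkewProd h (δ ∘ₗ h) (S.D p) = S.D (g.upperSkewProd h (δ ∘ₗ h) p)) ↔
      ∀ b, δ (SB.D b) = SA.D (δ b) := by
  simp only [hS.D_apply, LinearEquiv.upperSkewProd_apply, LinearMap.comp_apply,
    LinearEquiv.coe_coe, hg.1, hh.1, map_add, Prod.mk.injEq, add_right_inj, and_true,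
    Prod.forall]
  exact ⟨fun H b => by simpa using H 0 (h.symm b), fun H _ b => H (h b)⟩

theorem upperSkewProd_map_mul_inr_inl_iff (hS : IsCocycleExtension SA SB lact ract chi S)
    (δ : B →ₗ[k] A) :
    (∀ l b a, g.upperSkewProd h (δ ∘ₗ h) (S.mul l (0, b) (a, 0)) =
        S.mul l (g.upperSkewProd h (δ ∘ₗ h) (0, b)) (g.upperSkewProd h (δ ∘ₗ h) (a, 0))) ↔
      ∀ l b a, g (lact l (h.symm b) (g.symm a)) - lact l b a = SA.mul l (δ b) a := by
  simp only [hS.mul_apply, LinearEquiv.upperSkewProd_apply, LinearMap.comp_apply,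
    LinearEquiv.coe_coe, map_zero, LinearMap.zero_apply, add_zero, zero_add, Prod.mk.injEq,
    and_true]
  refine forall_congr' fun l => ?_
  conv_rhs => rw [h.surjective.forall]; ext b; rw [g.surjective.forall]
  refine forall₂_congr fun b a => ?_
  rw [h.symm_apply_apply, g.symm_apply_apply, sub_eq_iff_eq_add, add_comm]

theorem upperSkewProd_map_mul_inl_inr_iff (hS : IsCocycleExtension SA SB lact ract chi S)
    (δ : B →ₗ[k] A) :
    (∀ l a b, g.upperSkewProd h (δ ∘ₗ h) (S.mul l (a, 0) (0, b)) =
        S.mul l (g.upperSkewProd h (δ ∘ₗ h) (a, 0)) (g.upperSkewProd h (δ ∘ₗ h) (0, b))) ↔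
      ∀ l a b, g (ract l (g.symm a) (h.symm b)) - ract l a b = SA.mul l a (δ b) := by
  simp only [hS.mul_apply, LinearEquiv.upperSkewProd_apply, LinearMap.comp_apply,
    LinearEquiv.coe_coe, map_zero, LinearMap.zero_apply, add_zero, zero_add, Prod.mk.injEq,
    and_true]
  refine forall_congr' fun l => ?_
  conv_rhs => rw [g.surjective.forall]; ext a; rw [h.surjective.forall]
  refine forall₂_congr fun a b => ?_
  rw [h.symm_apply_apply, g.symm_apply_apply, sub_eq_iff_eq_add, add_comm]

theorem upperSkewProd_map_mul_inr_inr_iff (hS : IsCocycleExtension SA SB lact ract chi S)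
    (hh : IsConfAut SB h) (δ : B →ₗ[k] A)
    (hl : ∀ l b a, g (lact l (h.symm b) (g.symm a)) - lact l b a = SA.mul l (δ b) a)
    (hr : ∀ l a b, g (ract l (g.symm a) (h.symm b)) - ract l a b = SA.mul l a (δ b)) :
    (∀ l b b', g.upperSkewProd h (δ ∘ₗ h) (S.mul l (0, b) (0, b')) =
        S.mul l (g.upperSkewProd h (δ ∘ₗ h) (0, b)) (g.upperSkewProd h (δ ∘ₗ h) (0, b'))) ↔
      ∀ l b b', g (chi l (h.symm b) (h.symm b')) - chi l b b' =
        g (lact l (h.symm b) (g.symm (δ b'))) - δ (SB.mul l b b') +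
          g (ract l (g.symm (δ b)) (h.symm b')) - SA.mul l (δ b) (δ b') := by
  simp only [hS.mul_apply, LinearEquiv.upperSkewProd_apply, LinearMap.comp_apply,
    LinearEquiv.coe_coe, map_zero, LinearMap.zero_apply, add_zero, zero_add, Prod.mk.injEq,
    hh.2, and_true]
  have hl' : ∀ l b a, g (lact l b a) = SA.mul l (δ (h b)) (g a) + lact l (h b) (g a) := by
    intro l b a
    simpa [sub_eq_iff_eq_add, add_comm] using hl l (h b) (g a)
  have hr' : ∀ l a b, g (ract l a b) = SA.mul l (g a) (δ (h b)) + ract l (g a) (h b) := by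
    intro l a b
    simpa [sub_eq_iff_eq_add, add_comm] using hr l (g a) (h b)
  refine forall_congr' fun l => ?_
  conv_rhs => rw [h.surjective.forall]; ext b; rw [h.surjective.forall]
  refine forall₂_congr fun b b' => ?_
  simp only [h.symm_apply_apply, hl', hr', g.apply_symm_apply]
  rw [← sub_eq_zero, ← sub_eq_zero (a := g (chi l b b') - _)]
  exact iff_of_eq (congrArg (· = (0 : A)) (by abel))

theorem isConfAut_upperSkewProd_iff (hS : IsCocycleExtension SA SB lact ract chi S)
    (hg : IsConfAut SA g) (hh : IsConfAut SB h) (δ : B →ₗ[k] A) :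
    IsConfAut S (g.upperSkewProd h (δ ∘ₗ h)) ↔
      CocycleEquivVia SA SB (fun l b a => lact l b a) (fun l a b => ract l a b)
        (fun l b1 b2 => chi l b1 b2)
        (fun l b a => g (lact l (h.symm b) (g.symm a)))
        (fun l a b => g (ract l (g.symm a) (h.symm b)))
        (fun l b1 b2 => g (chi l (h.symm b1) (h.symm b2))) δ := by
  have hmul l := LinearMap.forall_apply_eq_iff_prod
    ((S.mul l).compr₂ (g.upperSkewProd h (δ ∘ₗ h) : A × B →ₗ[k] A × B))
    ((S.mul l).compl₁₂ (g.upperSkewProd h (δ ∘ₗ h) : A × B →ₗ[k] A × B)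
      (g.upperSkewProd h (δ ∘ₗ h)))
  have hll : ∀ l a a', g.upperSkewProd h (δ ∘ₗ h) (S.mul l (a, 0) (a', 0)) =
      S.mul l (g.upperSkewProd h (δ ∘ₗ h) (a, 0)) (g.upperSkewProd h (δ ∘ₗ h) (a', 0)) := by
    simp [hS.mul_apply, hg.2]
  simp only [LinearMap.compr₂_apply, LinearMap.compl₁₂_apply, LinearEquiv.coe_coe, hll,
    implies_true, true_and] at hmul
  simp only [IsConfAut, CocycleEquivVia, hmul, forall_and]
  rw [hS.upperSkewProd_map_D_iff hg hh, hS.upperSkewProd_map_mul_inr_inl_iff,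
    hS.upperSkewProd_map_mul_inl_inr_iff]
  refine and_congr_right fun _ =>
    ⟨fun ⟨hr, hl, hc⟩ => ⟨hl, hr, ?_⟩, fun ⟨hl, hr, hc⟩ => ⟨hr, hl, ?_⟩⟩
  · exact (hS.upperSkewProd_map_mul_inr_inr_iff hh δ hl hr).1 hc
  · exact (hS.upperSkewProd_map_mul_inr_inr_iff hh δ hl hr).2 hc

end IsCocycleExtension

theorem stmt_17 (k : Type*) [Field k]
    (A B : Type*) [AddCommGroup A] [Module k A] [AddCommGroup B] [Module k B]
    (SA : AssocConformalAlg k A) (SB : AssocConformalAlg k B)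
    (lact : k → B →ₗ[k] A →ₗ[k] A) (ract : k → A →ₗ[k] B →ₗ[k] A)
    (chi : k → B →ₗ[k] B →ₗ[k] A)
    (S : AssocConformalAlg k (A × B))
    (hSD : ∀ p : A × B, S.D p = (SA.D p.1, SB.D p.2))
    (hSm : ∀ (l : k) (p q : A × B),
      S.mul l p q = (SA.mul l p.1 q.1 + lact l p.2 q.1 + ract l p.1 q.2 + chi l p.2 q.2,
        SB.mul l p.2 q.2)) :
    (∀ (g : A ≃ₗ[k] A) (h : B ≃ₗ[k] B), IsConfAut SA g → IsConfAut SB h →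
      ((∃ f : (A × B) ≃ₗ[k] (A × B), IsConfAut S f ∧
          (∀ a : A, f (a, (0 : B)) = (g a, (0 : B))) ∧
          (∀ b : B, (f ((0 : A), b)).2 = h b)) ↔
        (∃ δ : B →ₗ[k] A,
          CocycleEquivVia SA SB (fun l b a => lact l b a) (fun l a b => ract l a b)
            (fun l b1 b2 => chi l b1 b2)
            (fun l b a => g (lact l (h.symm b) (g.symm a)))
            (fun l a b => g (ract l (g.symm a) (h.symm b)))
            (fun l b1 b2 => g (chi l (h.symm b1) (h.symm b2))) δ))) ∧
    (∀ (f f' : (A × B) ≃ₗ[k] (A × B)) (g g' : A ≃ₗ[k] A) (h h' : B ≃ₗ[k] B),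
      IsConfAut S f → IsConfAut S f' →
      (∀ a : A, f (a, (0 : B)) = (g a, (0 : B))) → (∀ b : B, (f ((0 : A), b)).2 = h b) →
      (∀ a : A, f' (a, (0 : B)) = (g' a, (0 : B))) →
      (∀ b : B, (f' ((0 : A), b)).2 = h' b) →
      (IsConfAut S (f.trans f') ∧
       (∀ a : A, (f.trans f') (a, (0 : B)) = ((g.trans g') a, (0 : B))) ∧
       (∀ b : B, ((f.trans f') ((0 : A), b)).2 = (h.trans h') b))) := by
  have hS : IsCocycleExtension SA SB lact ract chi S := ⟨hSD, hSm⟩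
  refine ⟨fun g h hg hh => ⟨?_, ?_⟩, ?_⟩
  · rintro ⟨f, hf, hfA, hfB⟩
    obtain ⟨δ, rfl⟩ := f.exists_eq_upperSkewProd g h hfA hfB
    exact ⟨δ, (hS.isConfAut_upperSkewProd_iff hg hh δ).1 hf⟩
  · rintro ⟨δ, hδ⟩
    exact ⟨_, (hS.isConfAut_upperSkewProd_iff hg hh δ).2 hδ, fun a => by simp, fun b => by simp⟩
  · intro f f' g g' h h' hf hf' hfA hfB hf'A hf'B
    refine ⟨hf.trans hf', fun a => by simp [hfA, hf'A], fun b => ?_⟩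
    have := (f' : A × B →ₗ[k] A × B).snd_apply_eq_of_snd_apply_inl (by simp [hf'A]) hf'B (f (0, b))
    simpa [hfB] using this
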